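/- arXiv:1610.09559 — 3 statements merged into one kernel-verified Lean document; each statement's English description precedes it below -/
import Mathlib

section
/- Let β = (1, β₂) ∈ ℝ² with β₂ ∈ [−ε, ε], let x = (x₁, x₂) ∈ [−1,1]² with x₂ > 0, and let y = ⟨β, x⟩ + η where η is uniformly distributed on [−1, 1]. Then the probability that (y + 1 − x₁)/x₂ < ε is at most ε, and the probability that (y − 1 − x₁)/x₂ > −ε is at most ε. Consequently, the probability that the interval [(y−1−x₁)/x₂, (y+1−x₁)/x₂] fails to contain [−ε, ε] is at most 2ε. -/
open MeasureTheory Set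
open scoped ENNReal

/-! Solving for `η`, each one-sided event says that `η` lands in an end segment of `[-1, 1]` of
length `(ε ∓ β₂) x₂ ≤ 2ε`, which has probability at most `ε`; the last bound is the union bound. -/

section UniformNoise

variable {Ω : Type*} [MeasurableSpace Ω] {μ : Measure Ω} {η : Ω → ℝ}

theorem measure_preimage_eq_of_map_eq_uniform (hη : Measurable η)
    (hunif : Measure.map η μ = (2 : ℝ≥0∞)⁻¹ • volume.restrict (Icc (-1 : ℝ) 1))
    {s : Set ℝ} (hs : MeasurableSet s) :
    μ (η ⁻¹' s) = 2⁻¹ * volume (s ∩ Icc (-1) 1) := by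
  rw [← Measure.map_apply hη hs, hunif, Measure.smul_apply, smul_eq_mul,
    Measure.restrict_apply hs]

theorem measure_lt_le_of_map_eq_uniform (hη : Measurable η)
    (hunif : Measure.map η μ = (2 : ℝ≥0∞)⁻¹ • volume.restrict (Icc (-1 : ℝ) 1)) (c : ℝ) :
    μ {ω | η ω < c} ≤ ENNReal.ofReal ((c + 1) / 2) :=
  calc μ (η ⁻¹' Iio c) = 2⁻¹ * volume (Iio c ∩ Icc (-1) 1) :=
        measure_preimage_eq_of_map_eq_uniform hη hunif measurableSet_Iio
    _ ≤ 2⁻¹ * volume (Icc (-1) c) :=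
        mul_le_mul_right (measure_mono fun _ hx => mem_Icc.2 ⟨hx.2.1, hx.1.le⟩) _
    _ = ENNReal.ofReal ((c + 1) / 2) := by
        rw [Real.volume_Icc, ENNReal.ofReal_div_of_pos two_pos, ENNReal.ofReal_ofNat,
          ENNReal.div_eq_inv_mul, sub_neg_eq_add]

theorem measure_gt_le_of_map_eq_uniform (hη : Measurable η)
    (hunif : Measure.map η μ = (2 : ℝ≥0∞)⁻¹ • volume.restrict (Icc (-1 : ℝ) 1)) (c : ℝ) :
    μ {ω | c < η ω} ≤ ENNReal.ofReal ((1 - c) / 2) :=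
  calc μ (η ⁻¹' Ioi c) = 2⁻¹ * volume (Ioi c ∩ Icc (-1) 1) :=
        measure_preimage_eq_of_map_eq_uniform hη hunif measurableSet_Ioi
    _ ≤ 2⁻¹ * volume (Icc c 1) :=
        mul_le_mul_right (measure_mono fun _ hx => mem_Icc.2 ⟨hx.1.le, hx.2.2⟩) _
    _ = ENNReal.ofReal ((1 - c) / 2) := by
        rw [Real.volume_Icc, ENNReal.ofReal_div_of_pos two_pos, ENNReal.ofReal_ofNat,
          ENNReal.div_eq_inv_mul]

end UniformNoise

theorem setOf_not_Icc_subset_Icc_subset_union {Ω : Type*} (a b : ℝ) (l u : Ω → ℝ) :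
    {ω | ¬ Icc a b ⊆ Icc (l ω) (u ω)} ⊆ {ω | u ω < b} ∪ {ω | l ω > a} := by
  intro ω hω
  by_contra h
  simp only [mem_union, mem_ofPred_eq, not_or, not_lt, gt_iff_lt] at h
  exact hω (Icc_subset_Icc h.2 h.1)

theorem stmt5_general {Ω : Type*} [MeasurableSpace Ω] (μ : Measure Ω)
    (ε x₁ x₂ β₂ : ℝ) (hε0 : 0 < ε)
    (hx₂0 : 0 < x₂) (hx₂1 : x₂ ≤ 1)
    (hβ₂ : β₂ ∈ Icc (-ε) ε)
    (η : Ω → ℝ) (hη : Measurable η)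
    (hunif : Measure.map η μ = (2 : ℝ≥0∞)⁻¹ • volume.restrict (Icc (-1 : ℝ) 1))
    (y : Ω → ℝ) (hy : ∀ ω, y ω = x₁ + β₂ * x₂ + η ω) :
    μ {ω | (y ω + 1 - x₁) / x₂ < ε} ≤ ENNReal.ofReal ε ∧
      μ {ω | (y ω - 1 - x₁) / x₂ > -ε} ≤ ENNReal.ofReal ε ∧
      μ {ω | ¬ Icc (-ε) ε ⊆ Icc ((y ω - 1 - x₁) / x₂) ((y ω + 1 - x₁) / x₂)}
        ≤ ENNReal.ofReal (2 * ε) := by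
  have upper_eq : {ω | (y ω + 1 - x₁) / x₂ < ε} = {ω | η ω < (ε - β₂) * x₂ - 1} := by
    ext ω
    simp only [mem_ofPred_eq, hy, div_lt_iff₀ hx₂0]
    constructor <;> intro h <;> linarith
  have lower_eq : {ω | (y ω - 1 - x₁) / x₂ > -ε} = {ω | 1 - (ε + β₂) * x₂ < η ω} := by
    ext ω
    simp only [mem_ofPred_eq, hy, gt_iff_lt, lt_div_iff₀ hx₂0]
    constructor <;> intro h <;> linarith
  have upper : μ {ω | (y ω + 1 - x₁) / x₂ < ε} ≤ ENNReal.ofReal ε := by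
    rw [upper_eq]
    refine (measure_lt_le_of_map_eq_uniform hη hunif _).trans (ENNReal.ofReal_le_ofReal ?_)
    nlinarith [hβ₂.1]
  have lower : μ {ω | (y ω - 1 - x₁) / x₂ > -ε} ≤ ENNReal.ofReal ε := by
    rw [lower_eq]
    refine (measure_gt_le_of_map_eq_uniform hη hunif _).trans (ENNReal.ofReal_le_ofReal ?_)
    nlinarith [hβ₂.2]
  refine ⟨upper, lower, ?_⟩
  calc _ ≤ μ ({ω | (y ω + 1 - x₁) / x₂ < ε} ∪ {ω | (y ω - 1 - x₁) / x₂ > -ε}) :=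
        measure_mono (setOf_not_Icc_subset_Icc_subset_union _ _ _ _)
    _ ≤ ENNReal.ofReal ε + ENNReal.ofReal ε := (measure_union_le _ _).trans (add_le_add upper lower)
    _ = ENNReal.ofReal (2 * ε) := by rw [← ENNReal.ofReal_add hε0.le hε0.le, two_mul]

/-- Let `β = (1, β₂)` with `β₂ ∈ [−ε, ε]`, let `x = (x₁, x₂) ∈ [−1,1]²` with `x₂ > 0`,
and let `y = x₁ + β₂ x₂ + η` where `η` is uniform on `[−1,1]`. Then
`P((y + 1 − x₁)/x₂ < ε) ≤ ε`, `P((y − 1 − x₁)/x₂ > −ε) ≤ ε`, and the probability that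
the interval `[(y−1−x₁)/x₂, (y+1−x₁)/x₂]` fails to contain `[−ε, ε]` is at most `2ε`. -/
theorem stmt5 {Ω : Type*} [MeasurableSpace Ω] (μ : Measure Ω) [IsProbabilityMeasure μ]
    (ε x₁ x₂ β₂ : ℝ) (hε0 : 0 < ε) (hε1 : ε ≤ 1 / 2)
    (hx₁ : x₁ ∈ Icc (-1 : ℝ) 1) (hx₂0 : 0 < x₂) (hx₂1 : x₂ ≤ 1)
    (hβ₂ : β₂ ∈ Icc (-ε) ε)
    (η : Ω → ℝ) (hη : Measurable η)
    (hunif : Measure.map η μ = (2 : ℝ≥0∞)⁻¹ • volume.restrict (Icc (-1 : ℝ) 1))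
    (y : Ω → ℝ) (hy : ∀ ω, y ω = x₁ + β₂ * x₂ + η ω) :
    μ {ω | (y ω + 1 - x₁) / x₂ < ε} ≤ ENNReal.ofReal ε ∧
      μ {ω | (y ω - 1 - x₁) / x₂ > -ε} ≤ ENNReal.ofReal ε ∧
      μ {ω | ¬ Icc (-ε) ε ⊆ Icc ((y ω - 1 - x₁) / x₂) ((y ω + 1 - x₁) / x₂)}
        ≤ ENNReal.ofReal (2 * ε) :=
  stmt5_general μ ε x₁ x₂ β₂ hε0 hx₂0 hx₂1 hβ₂ η hη hunif y hy
end

section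
/- Define an equivalence relation on [−1,1]² generated by: (i) vertical equivalence, (x₁, x₂) ~ (x₁, x₃) for any x₂, x₃; and (ii) diagonal equivalence, (x₁, x₂) ~ (x₁ − α, x₂ + 2α/ε) for any α with both points in [−1,1]², where ε ∈ (0,1] is fixed. Then the transitive closure of these relations starting from the corner point (1, −1) is all of [−1,1]²: every point (z₁, z₂) ∈ [−1,1]² is connected to (1, −1) by a finite chain of vertical and diagonal equivalences. -/
open Set

/-- The square `[−1,1]²`. -/
def square : Set (ℝ × ℝ) := Icc (-1 : ℝ) 1 ×ˢ Icc (-1 : ℝ) 1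

/-- One step of the equivalence: both points lie in the square, and they are either
vertically equivalent (same first coordinate) or diagonally equivalent
(`q = (p₁ − α, p₂ + 2α/ε)` for some real `α`). -/
def equivStep (ε : ℝ) (p q : ℝ × ℝ) : Prop :=
  p ∈ square ∧ q ∈ square ∧
    (p.1 = q.1 ∨ ∃ α : ℝ, q.1 = p.1 - α ∧ q.2 = p.2 + 2 * α / ε)

lemma mem_square {x y : ℝ} (h1 : -1 ≤ x) (h2 : x ≤ 1) (h3 : -1 ≤ y) (h4 : y ≤ 1) :
    ((x, y) : ℝ × ℝ) ∈ square := ⟨⟨h1, h2⟩, ⟨h3, h4⟩⟩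

lemma aux (ε : ℝ) (hε0 : 0 < ε) (hε1 : ε ≤ 1) :
    ∀ n : ℕ, ∀ x : ℝ, -1 ≤ x → x ≤ 1 → 1 - x ≤ n * ε →
      Relation.ReflTransGen (equivStep ε) ((1 : ℝ), (-1 : ℝ)) (x, -1) := by
  intro n
  induction n with
  | zero =>
    intro x h1 h2 h3
    have : x = 1 := le_antisymm h2 (by push_cast at h3; linarith)
    subst this
    exact Relation.ReflTransGen.refl
  | succ n ih =>
    intro x h1 h2 h3
    by_cases h : 1 - x ≤ ε
    · -- one diagonal step from (1,-1) to (x, -1 + 2*(1-x)/ε), then vertical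
      have hy1 : (-1 : ℝ) ≤ -1 + 2 * (1 - x) / ε := by
        have hx0 : (0:ℝ) ≤ 1 - x := by linarith
        have : 0 ≤ 2 * (1 - x) / ε := by positivity
        linarith
      have hy2 : -1 + 2 * (1 - x) / ε ≤ 1 := by
        have : 2 * (1 - x) / ε ≤ 2 := by
          rw [div_le_iff₀ hε0]; nlinarith
        linarith
      have s1 : equivStep ε ((1 : ℝ), (-1 : ℝ)) (x, -1 + 2 * (1 - x) / ε) := by
        refine ⟨mem_square (by norm_num) le_rfl le_rfl (by norm_num),
          mem_square h1 h2 hy1 hy2, Or.inr ⟨1 - x, by ring, rfl⟩⟩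
      have s2 : equivStep ε (x, -1 + 2 * (1 - x) / ε) ((x : ℝ), (-1 : ℝ)) := by
        refine ⟨mem_square h1 h2 hy1 hy2,
          mem_square h1 h2 le_rfl (by norm_num), Or.inl rfl⟩
      exact (Relation.ReflTransGen.single s1).tail s2
    · push_neg at h
      have hx' : Relation.ReflTransGen (equivStep ε) ((1 : ℝ), (-1 : ℝ)) (x + ε, -1) := by
        apply ih
        · linarith
        · linarith
        · push_cast at h3 ⊢; nlinarith
      have s1 : equivStep ε (x + ε, -1) ((x : ℝ), (1 : ℝ)) := by
        refine ⟨mem_square (by linarith) (by linarith) (by norm_num) (by norm_num),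
          mem_square h1 h2 (by norm_num) le_rfl, Or.inr ⟨ε, by ring, ?_⟩⟩
        field_simp
        ring
      have s2 : equivStep ε ((x : ℝ), (1 : ℝ)) ((x : ℝ), (-1 : ℝ)) := by
        exact ⟨mem_square h1 h2 (by norm_num) le_rfl,
          mem_square h1 h2 le_rfl (by norm_num), Or.inl rfl⟩
      exact (hx'.tail s1).tail s2

/-- The transitive closure of vertical and diagonal equivalence, started from the corner
`(1, −1)`, reaches every point of `[−1,1]²`: every `z ∈ [−1,1]²` is connected to
`(1,−1)` by a finite chain of vertical and diagonal equivalences. -/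
theorem stmt12 (ε : ℝ) (hε0 : 0 < ε) (hε1 : ε ≤ 1) :
    ∀ z ∈ square, Relation.ReflTransGen (equivStep ε) ((1 : ℝ), (-1 : ℝ)) z := by
  rintro ⟨z1, z2⟩ ⟨⟨h1, h2⟩, ⟨h3, h4⟩⟩
  obtain ⟨n, hn⟩ := exists_nat_ge ((1 - z1) / ε)
  have hle : 1 - z1 ≤ n * ε := by
    rw [div_le_iff₀ hε0] at hn; linarith
  have base := aux ε hε0 hε1 n z1 h1 h2 hle
  have s : equivStep ε (z1, -1) (z1, z2) :=
    ⟨mem_square h1 h2 le_rfl (by norm_num), mem_square h1 h2 h3 h4, Or.inl rfl⟩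
  exact base.tail s
end

section
/- Let V̄_t = X^T X + γI where X is a t×d real matrix and γ > 0, and let β̂ = V̄_t^{-1} X^T (Xβ + η) for β ∈ ℝ^d and η ∈ ℝ^t. Then for any x ∈ ℝ^d, x·(β̂ − β) = ⟨x, X^T η⟩_{V̄_t^{-1}} − γ·⟨x, β⟩_{V̄_t^{-1}}, where ⟨u, v⟩_A := u^T A v. Consequently, by Cauchy–Schwarz for the inner product induced by the positive definite matrix V̄_t^{-1}, |x·(β̂ − β)| ≤ ‖x‖_{V̄_t^{-1}} · (‖X^T η‖_{V̄_t^{-1}} + γ·‖β‖_{V̄_t^{-1}}). -/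
/-!
Since `XᵀX = V - γI`, the error of the ridge estimate is `β̂ - β = V⁻¹(Xᵀη - γβ)`. Pairing with
`x` gives the identity, and the bound is the triangle inequality followed by Cauchy–Schwarz for
the positive semidefinite form `(u, v) ↦ uᵀV⁻¹v`.
-/

open Matrix

namespace Matrix

variable {m n : Type*} [Fintype m] [Fintype n]

theorem PosSemidef.abs_dotProduct_mulVec_le [DecidableEq n] {A : Matrix n n ℝ}
    (hA : A.PosSemidef) (u v : n → ℝ) :
    |u ⬝ᵥ A *ᵥ v| ≤ √(u ⬝ᵥ A *ᵥ u) * √(v ⬝ᵥ A *ᵥ v) := by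
  have hsymm : LinearMap.IsSymm A.toBilin' :=
    LinearMap.BilinForm.isSymm_iff.mp (isSymm_toBilin'_iff_isSymm.mpr hA.isHermitian)
  have hsq : (u ⬝ᵥ A *ᵥ v) ^ 2 ≤ (u ⬝ᵥ A *ᵥ u) * (v ⬝ᵥ A *ᵥ v) := by
    simpa only [toBilin'_apply'] using A.toBilin'.apply_sq_le_of_symm
      (fun w ↦ by simpa [toBilin'_apply'] using hA.dotProduct_mulVec_nonneg w) hsymm u v
  rw [← Real.sqrt_mul (by simpa using hA.dotProduct_mulVec_nonneg u)]
  exact Real.abs_le_sqrt hsq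

theorem posDef_transpose_mul_self_add_smul_one [DecidableEq n] (X : Matrix m n ℝ) {γ : ℝ}
    (hγ : 0 < γ) : (Xᵀ * X + γ • (1 : Matrix n n ℝ)).PosDef := by
  have hXX : (Xᵀ * X).PosSemidef := by
    simpa only [conjTranspose_eq_transpose_of_trivial] using posSemidef_conjTranspose_mul_self X
  exact PosDef.posSemidef_add hXX (PosDef.one.smul hγ)

theorem inv_mulVec_transpose_mulVec_sub_eq {R : Type*} [CommRing R] [DecidableEq n]
    (X : Matrix m n R) (γ : R) (β : n → R) (η : m → R) {V : Matrix n n R}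
    (hV : V = Xᵀ * X + γ • (1 : Matrix n n R)) (hdet : IsUnit V.det) :
    V⁻¹ *ᵥ (Xᵀ *ᵥ (X *ᵥ β + η)) - β = V⁻¹ *ᵥ (Xᵀ *ᵥ η) - γ • V⁻¹ *ᵥ β := by
  have hXX : Xᵀ * X = V - γ • (1 : Matrix n n R) := by rw [hV]; abel
  rw [mulVec_add, mulVec_mulVec, hXX, mulVec_add, sub_mulVec, mulVec_sub, mulVec_mulVec,
    nonsing_inv_mul V hdet, one_mulVec, smul_mulVec, one_mulVec, mulVec_smul]
  abel

end Matrix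

/-- Ridge regression identity and Cauchy–Schwarz bound.  Let `V = XᵀX + γI` with
`γ > 0`, and `β̂ = V⁻¹ Xᵀ (Xβ + η)`.  Then for any `x`,
`x·(β̂ − β) = ⟨x, Xᵀη⟩_{V⁻¹} − γ⟨x, β⟩_{V⁻¹}`, and consequently
`|x·(β̂ − β)| ≤ ‖x‖_{V⁻¹}(‖Xᵀη‖_{V⁻¹} + γ‖β‖_{V⁻¹})`, where
`⟨u,v⟩_A = uᵀAv` and `‖u‖_A = √(uᵀAu)`. -/
theorem stmt16 {t d : ℕ} (X : Matrix (Fin t) (Fin d) ℝ) (γ : ℝ) (hγ : 0 < γ)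
    (β : Fin d → ℝ) (η : Fin t → ℝ) (x : Fin d → ℝ)
    (V : Matrix (Fin d) (Fin d) ℝ) (hV : V = Xᵀ * X + γ • (1 : Matrix (Fin d) (Fin d) ℝ))
    (βhat : Fin d → ℝ) (hβhat : βhat = V⁻¹.mulVec (Xᵀ.mulVec (X.mulVec β + η))) :
    x ⬝ᵥ (βhat - β)
        = x ⬝ᵥ V⁻¹.mulVec (Xᵀ.mulVec η) - γ * (x ⬝ᵥ V⁻¹.mulVec β) ∧
      |x ⬝ᵥ (βhat - β)|
        ≤ Real.sqrt (x ⬝ᵥ V⁻¹.mulVec x) *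
            (Real.sqrt ((Xᵀ.mulVec η) ⬝ᵥ V⁻¹.mulVec (Xᵀ.mulVec η))
              + γ * Real.sqrt (β ⬝ᵥ V⁻¹.mulVec β)) := by
  have hVpd : V.PosDef := hV ▸ posDef_transpose_mul_self_add_smul_one X hγ
  have hid : x ⬝ᵥ (βhat - β)
      = x ⬝ᵥ V⁻¹.mulVec (Xᵀ.mulVec η) - γ * (x ⬝ᵥ V⁻¹.mulVec β) := by
    rw [hβhat,
      inv_mulVec_transpose_mulVec_sub_eq X γ β η hV ((isUnit_iff_isUnit_det V).mp hVpd.isUnit),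
      dotProduct_sub, dotProduct_smul, smul_eq_mul]
  have hCS := hVpd.inv.posSemidef.abs_dotProduct_mulVec_le x
  refine ⟨hid, ?_⟩
  calc |x ⬝ᵥ (βhat - β)|
      ≤ |x ⬝ᵥ V⁻¹ *ᵥ (Xᵀ *ᵥ η)| + γ * |x ⬝ᵥ V⁻¹ *ᵥ β| := by
        rw [hid]
        exact (abs_sub _ _).trans_eq (by rw [abs_mul, abs_of_pos hγ])
    _ ≤ √(x ⬝ᵥ V⁻¹ *ᵥ x) * √((Xᵀ *ᵥ η) ⬝ᵥ V⁻¹ *ᵥ (Xᵀ *ᵥ η))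
        + γ * (√(x ⬝ᵥ V⁻¹ *ᵥ x) * √(β ⬝ᵥ V⁻¹ *ᵥ β)) := by
        gcongr
        exacts [hCS _, hCS _]
    _ = _ := by ring
end
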